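/- arXiv:math/0611139 — 3 statements merged into one kernel-verified Lean document; each statement's English description precedes it below -/
import Mathlib

section
/- On ℂ³ with standard symplectic form ω = Σₖ dxₖ∧dyₖ (zₖ = xₖ + iyₖ), the three functions b₁ = Im(z₁z₂z₃), b₂ = |z₁|² − |z₂|², b₃ = |z₁|² − |z₃|² pairwise Poisson commute. -/
/-- Poisson bracket on ℂ³ ≅ ℝ⁶ (with zₖ = xₖ + iyₖ) associated to ω = Σₖ dxₖ∧dyₖ:
{f,g} = Σₖ (∂f/∂xₖ ∂g/∂yₖ − ∂f/∂yₖ ∂g/∂xₖ), where ∂/∂xₖ is the direction eₖ and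
∂/∂yₖ is the direction i·eₖ. -/
noncomputable def poisson3 (f g : ℂ × ℂ × ℂ → ℝ) (p : ℂ × ℂ × ℂ) : ℝ :=
  (fderiv ℝ f p (1, 0, 0) * fderiv ℝ g p (Complex.I, 0, 0)
      - fderiv ℝ f p (Complex.I, 0, 0) * fderiv ℝ g p (1, 0, 0))
    + (fderiv ℝ f p (0, 1, 0) * fderiv ℝ g p (0, Complex.I, 0)
      - fderiv ℝ f p (0, Complex.I, 0) * fderiv ℝ g p (0, 1, 0))
    + (fderiv ℝ f p (0, 0, 1) * fderiv ℝ g p (0, 0, Complex.I)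
      - fderiv ℝ f p (0, 0, Complex.I) * fderiv ℝ g p (0, 0, 1))

noncomputable def hlB1 (p : ℂ × ℂ × ℂ) : ℝ := (p.1 * p.2.1 * p.2.2).im
noncomputable def hlB2 (p : ℂ × ℂ × ℂ) : ℝ := ‖p.1‖ ^ 2 - ‖p.2.1‖ ^ 2
noncomputable def hlB3 (p : ℂ × ℂ × ℂ) : ℝ := ‖p.1‖ ^ 2 - ‖p.2.2‖ ^ 2

open Complex ContinuousLinearMap
open scoped RealInnerProductSpace

lemma fderiv_norm_sq_sub_norm_sq_apply {E F : Type*} [NormedAddCommGroup E] [NormedSpace ℝ E]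
    [NormedAddCommGroup F] [InnerProductSpace ℝ F] (L M : E →L[ℝ] F) (p v : E) :
    fderiv ℝ (fun q => ‖L q‖ ^ 2 - ‖M q‖ ^ 2) p v = 2 * (⟪L p, L v⟫ - ⟪M p, M v⟫) := by
  rw [((L.hasFDerivAt (x := p)).norm_sq.fun_sub M.hasFDerivAt.norm_sq).fderiv]
  simp only [sub_apply, smul_apply, comp_apply, coe_innerSL_apply, nsmul_eq_mul, Nat.cast_ofNat]
  ring

lemma fderiv_hlB1_apply (p v : ℂ × ℂ × ℂ) :
    fderiv ℝ hlB1 p v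
      = (v.1 * p.2.1 * p.2.2 + p.1 * v.2.1 * p.2.2 + p.1 * p.2.1 * v.2.2).im := by
  have h : HasFDerivAt hlB1 _ p := imCLM.hasFDerivAt.comp p
    ((hasFDerivAt_fst.mul hasFDerivAt_snd.fst).mul hasFDerivAt_snd.snd)
  rw [h.fderiv]
  simp only [Pi.mul_apply, smul_add, comp_add, add_apply, comp_apply, smul_apply, coe_fst',
    coe_snd', smul_eq_mul, imCLM_apply, ← add_im]
  congr 1
  ring

lemma fderiv_hlB2_apply (p v : ℂ × ℂ × ℂ) :
    fderiv ℝ hlB2 p v = 2 * (⟪p.1, v.1⟫ - ⟪p.2.1, v.2.1⟫) :=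
  fderiv_norm_sq_sub_norm_sq_apply (fst ℝ ℂ (ℂ × ℂ)) ((fst ℝ ℂ ℂ).comp (snd ℝ ℂ (ℂ × ℂ))) p v

lemma fderiv_hlB3_apply (p v : ℂ × ℂ × ℂ) :
    fderiv ℝ hlB3 p v = 2 * (⟪p.1, v.1⟫ - ⟪p.2.2, v.2.2⟫) :=
  fderiv_norm_sq_sub_norm_sq_apply (fst ℝ ℂ (ℂ × ℂ)) ((snd ℝ ℂ ℂ).comp (snd ℝ ℂ (ℂ × ℂ))) p v

/-- On ℂ³, b₁ = Im(z₁z₂z₃), b₂ = |z₁|² − |z₂|², b₃ = |z₁|² − |z₃|² pairwise Poisson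
commute. -/
theorem stmt2 :
    ∀ p : ℂ × ℂ × ℂ,
      poisson3 hlB1 hlB2 p = 0 ∧ poisson3 hlB1 hlB3 p = 0 ∧ poisson3 hlB2 hlB3 p = 0 := by
  intro p
  refine ⟨?_, ?_, ?_⟩ <;>
  · simp only [poisson3, fderiv_hlB1_apply, fderiv_hlB2_apply, fderiv_hlB3_apply, Complex.inner,
      inner_zero_right, mul_re, mul_im, add_im, I_re, I_im, conj_re, conj_im, zero_re, zero_im,
      one_re, one_im]
    ring
end

section
/- Let X = ℂ³ ∖ {1 + z₁z₂z₃ = 0} with the standard symplectic form. Then the functions f₁ = log|1 + z₁z₂z₃|, f₂ = |z₁|² − |z₂|², f₃ = |z₁|² − |z₃|² pairwise Poisson commute on X. -/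
noncomputable def posF1 (p : ℂ × ℂ × ℂ) : ℝ := Real.log ‖1 + p.1 * p.2.1 * p.2.2‖
noncomputable def posF2 (p : ℂ × ℂ × ℂ) : ℝ := ‖p.1‖ ^ 2 - ‖p.2.1‖ ^ 2
noncomputable def posF3 (p : ℂ × ℂ × ℂ) : ℝ := ‖p.1‖ ^ 2 - ‖p.2.2‖ ^ 2

open Complex

noncomputable def weightedNormSq (a b c : ℝ) (p : ℂ × ℂ × ℂ) : ℝ :=
  a * ‖p.1‖ ^ 2 + b * ‖p.2.1‖ ^ 2 + c * ‖p.2.2‖ ^ 2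

def rotationField (a b c : ℝ) (p : ℂ × ℂ × ℂ) : ℂ × ℂ × ℂ :=
  (a * I * p.1, b * I * p.2.1, c * I * p.2.2)

theorem fderiv_weightedNormSq_apply (a b c : ℝ) (p v : ℂ × ℂ × ℂ) :
    fderiv ℝ (weightedNormSq a b c) p v
      = 2 * (a * inner ℝ p.1 v.1 + b * inner ℝ p.2.1 v.2.1 + c * inner ℝ p.2.2 v.2.2) := by
  have h : HasFDerivAt (weightedNormSq a b c) _ p :=
    ((hasFDerivAt_fst.norm_sq.const_mul a).add (hasFDerivAt_snd.fst.norm_sq.const_mul b)).add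
      (hasFDerivAt_snd.snd.norm_sq.const_mul c)
  rw [h.fderiv]
  simp only [add_apply, smul_apply, ContinuousLinearMap.comp_apply, ContinuousLinearMap.coe_fst',
    ContinuousLinearMap.coe_snd', coe_innerSL_apply, nsmul_eq_mul, Nat.cast_ofNat,
    smul_eq_mul]
  ring

theorem poisson3_weightedNormSq (f : ℂ × ℂ × ℂ → ℝ) (a b c : ℝ) (p : ℂ × ℂ × ℂ) :
    poisson3 f (weightedNormSq a b c) p = -2 * fderiv ℝ f p (rotationField a b c p) := by
  have hv : rotationField a b c p
      = (a * p.1.re) • ((I, 0, 0) : ℂ × ℂ × ℂ) - (a * p.1.im) • ((1, 0, 0) : ℂ × ℂ × ℂ)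
        + ((b * p.2.1.re) • ((0, I, 0) : ℂ × ℂ × ℂ) - (b * p.2.1.im) • ((0, 1, 0) : ℂ × ℂ × ℂ))
        + ((c * p.2.2.re) • ((0, 0, I) : ℂ × ℂ × ℂ) - (c * p.2.2.im) • ((0, 0, 1) : ℂ × ℂ × ℂ)) := by
    ext <;> simp [rotationField, Complex.ext_iff]
  simp only [poisson3, fderiv_weightedNormSq_apply, hv, map_add, map_sub, map_smul, smul_eq_mul]
  simp only [Complex.inner, mul_re, I_re, conj_re, zero_mul, I_im, conj_im, mul_neg, one_mul,
    sub_neg_eq_add, zero_add, inner_zero_right, mul_zero, add_zero, neg_mul]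
  ring

theorem fderiv_weightedNormSq_rotationField (a b c a' b' c' : ℝ) (p : ℂ × ℂ × ℂ) :
    fderiv ℝ (weightedNormSq a b c) p (rotationField a' b' c' p) = 0 := by
  rw [fderiv_weightedNormSq_apply]
  simp only [rotationField, Complex.inner, mul_re, mul_im, conj_re, conj_im, ofReal_re, ofReal_im,
    I_re, I_im]
  ring

theorem fderiv_posF1_rotationField {a b c : ℝ} (habc : a + b + c = 0) {p : ℂ × ℂ × ℂ}
    (hp : 1 + p.1 * p.2.1 * p.2.2 ≠ 0) :
    fderiv ℝ posF1 p (rotationField a b c p) = 0 := by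
  set h : ℂ × ℂ × ℂ → ℂ := fun q => 1 + q.1 * q.2.1 * q.2.2
  have hh : HasFDerivAt h _ p :=
    (((hasFDerivAt_fst (𝕜 := ℝ) (p := p)).mul (hasFDerivAt_snd (𝕜 := ℝ)).fst).mul
      (hasFDerivAt_snd (𝕜 := ℝ)).snd).const_add (1 : ℂ)
  have hlog : DifferentiableAt ℝ (fun w : ℂ => Real.log ‖w‖) (h p) :=
    (differentiableAt_id.norm ℝ hp).log (norm_ne_zero_iff.mpr hp)
  have hker : fderiv ℝ h p (rotationField a b c p) = 0 := by
    rw [hh.fderiv]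
    simp only [rotationField, Pi.mul_apply, add_apply, smul_apply, ContinuousLinearMap.comp_apply,
      ContinuousLinearMap.coe_fst', ContinuousLinearMap.coe_snd', smul_add, smul_eq_mul]
    have habc' : (a + b + c : ℂ) = 0 := by exact_mod_cast habc
    linear_combination I * p.1 * p.2.1 * p.2.2 * habc'
  change fderiv ℝ ((fun w : ℂ => Real.log ‖w‖) ∘ h) p _ = 0
  rw [fderiv_comp p hlog hh.differentiableAt]
  simp [hker]

theorem posF2_eq_weightedNormSq : posF2 = weightedNormSq 1 (-1) 0 := by
  funext p; simp [posF2, weightedNormSq, sub_eq_add_neg]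

theorem posF3_eq_weightedNormSq : posF3 = weightedNormSq 1 0 (-1) := by
  funext p; simp [posF3, weightedNormSq, sub_eq_add_neg]

/-- On X = ℂ³ ∖ {1 + z₁z₂z₃ = 0}, the functions f₁ = log|1 + z₁z₂z₃|,
f₂ = |z₁|² − |z₂|², f₃ = |z₁|² − |z₃|² pairwise Poisson commute. -/
theorem stmt3 :
    ∀ p : ℂ × ℂ × ℂ, 1 + p.1 * p.2.1 * p.2.2 ≠ 0 →
      poisson3 posF1 posF2 p = 0 ∧ poisson3 posF1 posF3 p = 0 ∧ poisson3 posF2 posF3 p = 0 := by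
  intro p hp
  refine ⟨?_, ?_, ?_⟩
  · rw [posF2_eq_weightedNormSq, poisson3_weightedNormSq,
      fderiv_posF1_rotationField (by norm_num) hp, mul_zero]
  · rw [posF3_eq_weightedNormSq, poisson3_weightedNormSq,
      fderiv_posF1_rotationField (by norm_num) hp, mul_zero]
  · rw [posF2_eq_weightedNormSq, posF3_eq_weightedNormSq, poisson3_weightedNormSq,
      fderiv_weightedNormSq_rotationField, mul_zero]
end

section
/- Let X = (ℂ² ∖ {z₁z₂ − 1 = 0}) × ℂ* with the standard symplectic form of ℂ³. Then the functions f₁ = (|z₁|² − |z₂|²)/2, f₂ = log|z₃|, f₃ = log|z₁z₂ − 1| pairwise Poisson commute on X. -/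
noncomputable def genF1 (p : ℂ × ℂ × ℂ) : ℝ :=
  (‖p.1‖ ^ 2 - ‖p.2.1‖ ^ 2) / 2
noncomputable def genF2 (p : ℂ × ℂ × ℂ) : ℝ := Real.log ‖p.2.2‖
noncomputable def genF3 (p : ℂ × ℂ × ℂ) : ℝ := Real.log ‖p.1 * p.2.1 - 1‖

/-!
Write the real differential of `f` as `df = Re (Σₖ aₖ dzₖ)` (so `a = 2 ∂f/∂z`). Then
`{f, g} = Im (Σₖ aₖ b̄ₖ)`, and the gradients of the three functions are
`(z̄₁, -z̄₂, 0)`, `(0, 0, 1/z₃)` and `(z₂, z₁, 0)/(z₁z₂ - 1)`. The brackets with `f₂` vanish because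
the gradients have disjoint supports, and `{f₁, f₃} = Im ((z̄₁z̄₂ - z̄₂z̄₁)/(z̄₁z̄₂ - 1)) = 0`, reflecting that the circle action `(e^{it}z₁, e^{-it}z₂)`
generated by `f₁` preserves `z₁z₂`.
-/

open ComplexConjugate

def HasComplexGradient (f : ℂ × ℂ × ℂ → ℝ) (a p : ℂ × ℂ × ℂ) : Prop :=
  ∀ v, fderiv ℝ f p v = (a.1 * v.1 + a.2.1 * v.2.1 + a.2.2 * v.2.2).re

theorem poisson3_eq_im_of_hasComplexGradient {f g : ℂ × ℂ × ℂ → ℝ} {a b p : ℂ × ℂ × ℂ}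
    (hf : HasComplexGradient f a p) (hg : HasComplexGradient g b p) :
    poisson3 f g p = (a.1 * conj b.1 + a.2.1 * conj b.2.1 + a.2.2 * conj b.2.2).im := by
  simp [poisson3, hf _, hg _]

theorem fderiv_log_norm_apply {E : Type*} [NormedAddCommGroup E] [NormedSpace ℝ E]
    {f : E → ℂ} {f' : E →L[ℝ] ℂ} {x : E} (hf : HasFDerivAt f f' x) (hx : f x ≠ 0) (v : E) :
    fderiv ℝ (fun y => Real.log ‖f y‖) x v = ((f x)⁻¹ * f' v).re := by
  have hlog : (fun y => Real.log ‖f y‖) = fun y => 2⁻¹ * Real.log (‖f y‖ ^ 2) := by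
    funext y; rw [Real.log_pow]; ring
  have hsq : ‖f x‖ ^ 2 ≠ 0 := by positivity
  rw [hlog, ((hf.norm_sq.log hsq).const_mul 2⁻¹).fderiv]
  simp only [smul_apply, ContinuousLinearMap.comp_apply, coe_innerSL_apply,
    Complex.inner, Complex.mul_re, Complex.conj_re, Complex.conj_im, mul_neg, sub_neg_eq_add,
    smul_add, nsmul_eq_mul, Nat.cast_ofNat, smul_eq_mul, Complex.inv_re, ← Complex.sq_norm,
    Complex.inv_im]
  ring

theorem hasComplexGradient_genF1 (p : ℂ × ℂ × ℂ) :
    HasComplexGradient genF1 (conj p.1, -conj p.2.1, 0) p := by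
  intro v
  have h : HasFDerivAt genF1 _ p :=
    (hasFDerivAt_fst.norm_sq.sub (hasFDerivAt_snd (𝕜 := ℝ) (p := p)).fst.norm_sq).mul_const
      (2⁻¹ : ℝ)
  rw [h.fderiv]
  simp only [smul_apply, sub_apply,
    ContinuousLinearMap.comp_apply, ContinuousLinearMap.coe_fst', ContinuousLinearMap.coe_snd',
    coe_innerSL_apply, Complex.inner, Complex.mul_re, Complex.conj_re, Complex.conj_im, mul_neg,
    sub_neg_eq_add, smul_add, nsmul_eq_mul, Nat.cast_ofNat, smul_eq_mul, neg_mul, zero_mul,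
    add_zero, Complex.add_re, Complex.neg_re, neg_add_rev]
  ring

theorem hasComplexGradient_genF2 {p : ℂ × ℂ × ℂ} (hp : p.2.2 ≠ 0) :
    HasComplexGradient genF2 (0, 0, (p.2.2)⁻¹) p := by
  intro v
  have h : HasFDerivAt (fun q : ℂ × ℂ × ℂ => q.2.2) _ p := (hasFDerivAt_snd (𝕜 := ℝ)).snd
  refine (fderiv_log_norm_apply h hp v).trans ?_
  simp

theorem hasComplexGradient_genF3 {p : ℂ × ℂ × ℂ} (hp : p.1 * p.2.1 - 1 ≠ 0) :
    HasComplexGradient genF3 (p.2.1 / (p.1 * p.2.1 - 1), p.1 / (p.1 * p.2.1 - 1), 0) p := by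
  intro v
  have h : HasFDerivAt (fun q : ℂ × ℂ × ℂ => q.1 * q.2.1 - 1) _ p :=
    (hasFDerivAt_fst.mul (hasFDerivAt_snd (𝕜 := ℝ) (p := p)).fst).sub_const 1
  refine (fderiv_log_norm_apply h hp v).trans (congrArg Complex.re ?_)
  simp only [add_apply, smul_apply,
    ContinuousLinearMap.comp_apply, ContinuousLinearMap.coe_snd', ContinuousLinearMap.coe_fst',
    smul_eq_mul, zero_mul, add_zero]
  ring

/-- On X = (ℂ² ∖ {z₁z₂ − 1 = 0}) × ℂ*, the functions f₁ = (|z₁|² − |z₂|²)/2,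
f₂ = log|z₃|, f₃ = log|z₁z₂ − 1| pairwise Poisson commute. -/
theorem stmt4 :
    ∀ p : ℂ × ℂ × ℂ, p.1 * p.2.1 - 1 ≠ 0 → p.2.2 ≠ 0 →
      poisson3 genF1 genF2 p = 0 ∧ poisson3 genF1 genF3 p = 0 ∧ poisson3 genF2 genF3 p = 0 := by
  intro p hw hz
  have h1 := hasComplexGradient_genF1 p
  have h2 := hasComplexGradient_genF2 hz
  have h3 := hasComplexGradient_genF3 hw
  rw [poisson3_eq_im_of_hasComplexGradient h1 h2, poisson3_eq_im_of_hasComplexGradient h1 h3,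
    poisson3_eq_im_of_hasComplexGradient h2 h3]
  refine ⟨by simp, ?_, by simp⟩
  have hcancel : conj p.1 * conj (p.2.1 / (p.1 * p.2.1 - 1))
      - conj p.2.1 * conj (p.1 / (p.1 * p.2.1 - 1)) = 0 := by
    rw [map_div₀, map_div₀]; ring
  simpa [← sub_eq_add_neg] using congrArg Complex.im hcancel
end
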